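/- The family {T_{μ√r,t} : r > 0} satisfies the large deviation principle with speed r and good rate function J(b) = μ²b/2 for b ∈ [0,t] and J(b) = ∞ otherwise: for every closed set C ⊆ ℝ, limsup_{r→∞} (1/r) log P(T_{μ√r,t} ∈ C) ≤ -inf_{b∈C} J(b), and for every open set G, liminf_{r→∞} (1/r) log P(T_{μ√r,t} ∈ G) ≥ -inf_{b∈G} J(b). -/

import Mathlib

open Real Filter MeasureTheory

/-- Extended-real logarithm of a probability value, sending `0` to `⊥`. -/
noncomputable def eLogProb (x : ENNReal) : EReal :=
  if x = 0 then ⊥ else ((Real.log x.toReal : ℝ) : EReal)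

/-- The rate function `J(b) = μ²b/2` on `[0,t]`, `∞` outside. -/
noncomputable def rateJ (μ t b : ℝ) : EReal :=
  if b ∈ Set.Icc 0 t then ((μ ^ 2 * b / 2 : ℝ) : EReal) else ⊤

/-!
Write `c = μ² r / 2`. For `0 < a ≤ t` the distribution function gives
`P(T > a) = (2/π) ∫₀^{√((t-a)/a)} e^{-ca(1+y²)} / (1+y²) dy`, and this integral lies between
`k/(1+k²) · e^{-ca(1+k²)}` (restrict to `[0,k]`) and `(π/2) e^{-ca}` (as `∫ 1/(1+y²) ≤ π/2`).
Hence on the scale `r`, `P(T > a)` decays like `e^{-r μ² a/2}` up to an arbitrarily small change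
of `a`, and `T` has no mass outside `(0,t]`. The upper bound for a closed `C` comes from the least
point of `C ∩ [0,t]`; the lower bound for an open `G` from a short interval `(a,b] ⊆ G`, whose mass
`P(T > a) - P(T > b)` is dominated by its first term.
-/

open Set
open scoped ENNReal Topology

section Integral

lemma continuous_exp_div_one_add_sq (s : ℝ) :
    Continuous fun y : ℝ => exp (-s * (1 + y ^ 2)) / (1 + y ^ 2) :=
  Continuous.div (by fun_prop) (by fun_prop) fun y => by positivity

lemma integral_exp_div_one_add_sq_le {s L : ℝ} (hs : 0 ≤ s) (hL : 0 ≤ L) :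
    ∫ y in (0:ℝ)..L, exp (-s * (1 + y ^ 2)) / (1 + y ^ 2) ≤ π / 2 * exp (-s) :=
  calc ∫ y in (0:ℝ)..L, exp (-s * (1 + y ^ 2)) / (1 + y ^ 2)
      ≤ ∫ y in (0:ℝ)..L, exp (-s) * (1 + y ^ 2)⁻¹ := by
        refine intervalIntegral.integral_mono_on hL
          ((continuous_exp_div_one_add_sq s).intervalIntegrable _ _)
          (Continuous.intervalIntegrable (by fun_prop (disch := intro; positivity)) _ _)
          fun y _ => ?_
        rw [← div_eq_mul_inv]
        gcongr
        nlinarith [sq_nonneg y]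
    _ = exp (-s) * arctan L := by
        rw [intervalIntegral.integral_const_mul, integral_inv_one_add_sq, arctan_zero, sub_zero]
    _ ≤ π / 2 * exp (-s) := by
        rw [mul_comm]
        gcongr
        exact (arctan_lt_pi_div_two L).le

lemma le_integral_exp_div_one_add_sq {s k L : ℝ} (hs : 0 ≤ s) (hk : 0 ≤ k) (hkL : k ≤ L) :
    k / (1 + k ^ 2) * exp (-s * (1 + k ^ 2))
      ≤ ∫ y in (0:ℝ)..L, exp (-s * (1 + y ^ 2)) / (1 + y ^ 2) :=
  calc k / (1 + k ^ 2) * exp (-s * (1 + k ^ 2))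
      = ∫ _ in (0:ℝ)..k, exp (-s * (1 + k ^ 2)) / (1 + k ^ 2) := by
        rw [intervalIntegral.integral_const, smul_eq_mul, sub_zero]
        ring
    _ ≤ ∫ y in (0:ℝ)..k, exp (-s * (1 + y ^ 2)) / (1 + y ^ 2) := by
        refine intervalIntegral.integral_mono_on hk intervalIntegrable_const
          ((continuous_exp_div_one_add_sq s).intervalIntegrable _ _) fun y hy => ?_
        have hyk : y ^ 2 ≤ k ^ 2 := pow_le_pow_left₀ hy.1 hy.2 2
        exact div_le_div₀ (by positivity) (exp_le_exp.2 (by nlinarith)) (by positivity)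
          (by linarith)
    _ ≤ ∫ y in (0:ℝ)..L, exp (-s * (1 + y ^ 2)) / (1 + y ^ 2) :=
        intervalIntegral.integral_mono_interval le_rfl hk hkL
          (Eventually.of_forall fun y => by positivity)
          ((continuous_exp_div_one_add_sq s).intervalIntegrable _ _)

end Integral

noncomputable def lastZeroTail (m t a : ℝ) : ℝ :=
  2 / π * ∫ y in (0:ℝ)..√((t - a) / a), exp (-(m ^ 2 / 2) * a * (1 + y ^ 2)) / (1 + y ^ 2)

section LastZeroTail

variable {m t a : ℝ}

lemma lastZeroTail_self (m t : ℝ) : lastZeroTail m t t = 0 := by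
  simp [lastZeroTail]

lemma lastZeroTail_le_exp (ha : 0 ≤ a) : lastZeroTail m t a ≤ exp (-(m ^ 2 / 2 * a)) := by
  have h := integral_exp_div_one_add_sq_le (s := m ^ 2 / 2 * a) (by positivity)
    (sqrt_nonneg ((t - a) / a))
  rw [lastZeroTail]
  simp only [neg_mul] at h ⊢
  calc 2 / π * _ ≤ 2 / π * (π / 2 * exp (-(m ^ 2 / 2 * a))) := by gcongr
    _ = _ := by field_simp

lemma le_lastZeroTail {k : ℝ} (ha : 0 ≤ a) (hk : 0 ≤ k) (hkL : k ≤ √((t - a) / a)) :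
    2 / π * (k / (1 + k ^ 2)) * exp (-(m ^ 2 / 2 * (a * (1 + k ^ 2)))) ≤ lastZeroTail m t a := by
  have h := le_integral_exp_div_one_add_sq (s := m ^ 2 / 2 * a) (by positivity) hk hkL
  simp only [neg_mul] at h
  rw [lastZeroTail, mul_assoc]
  simp only [neg_mul]
  gcongr
  rwa [← mul_assoc]

end LastZeroTail

/-- `ν` is the law of the last zero `T_{m,t}` on `[0,t]` of a Brownian motion with drift `m`. -/
structure IsLastZeroLaw (m t : ℝ) (ν : Measure ℝ) : Prop where
  isProbabilityMeasure : IsProbabilityMeasure ν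
  measure_Iic_zero : ν (Iic 0) = 0
  measure_Iic : ∀ a ∈ Ioc 0 t, ν (Iic a) = ENNReal.ofReal (1 - lastZeroTail m t a)

namespace IsLastZeroLaw

variable {m t a b : ℝ} {ν : Measure ℝ} {C : Set ℝ}

lemma measure_Ioi (hν : IsLastZeroLaw m t ν) (ha : a ∈ Ioc 0 t) :
    ν (Ioi a) = ENNReal.ofReal (lastZeroTail m t a) := by
  have := hν.isProbabilityMeasure
  have hle : lastZeroTail m t a ≤ 1 :=
    (lastZeroTail_le_exp ha.1.le).trans (exp_le_one_iff.2 (by nlinarith [sq_nonneg m, ha.1]))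
  rw [← compl_Iic, prob_compl_eq_one_sub measurableSet_Iic, hν.measure_Iic a ha,
    ← ENNReal.ofReal_one, ← ENNReal.ofReal_sub _ (sub_nonneg.2 hle), sub_sub_cancel]

lemma measure_Ioi_self (hν : IsLastZeroLaw m t ν) (ht : 0 < t) : ν (Ioi t) = 0 := by
  rw [hν.measure_Ioi ⟨ht, le_rfl⟩, lastZeroTail_self, ENNReal.ofReal_zero]

lemma measure_eq_zero_of_inter_Icc_eq_empty (hν : IsLastZeroLaw m t ν) (ht : 0 < t)
    (hC : C ∩ Icc 0 t = ∅) : ν C = 0 := by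
  refine measure_mono_null (fun z hz => ?_) (measure_union_null hν.measure_Iic_zero
    (hν.measure_Ioi_self ht))
  by_contra hz'
  simp only [mem_union, mem_Iic, mem_Ioi, not_or, not_le] at hz'
  exact hC.subset ⟨hz, hz'.1.le, not_lt.1 hz'.2⟩

lemma measure_le_exp (hν : IsLastZeroLaw m t ν) (ha : a ∈ Ioc 0 t) (hC : C ⊆ Iic 0 ∪ Ioi a) :
    ν C ≤ ENNReal.ofReal (exp (-(m ^ 2 / 2 * a))) :=
  calc ν C ≤ ν (Iic 0) + ν (Ioi a) := (measure_mono hC).trans (measure_union_le _ _)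
    _ = ENNReal.ofReal (lastZeroTail m t a) := by
        rw [hν.measure_Iic_zero, zero_add, hν.measure_Ioi ha]
    _ ≤ _ := ENNReal.ofReal_le_ofReal (lastZeroTail_le_exp ha.1.le)

lemma ofReal_sub_le_measure_Ioc (hν : IsLastZeroLaw m t ν) (ha : a ∈ Ioc 0 t)
    (hb : b ∈ Ioc 0 t) :
    ENNReal.ofReal (lastZeroTail m t a) - ENNReal.ofReal (lastZeroTail m t b) ≤ ν (Ioc a b) := by
  rw [← hν.measure_Ioi ha, ← hν.measure_Ioi hb, ← Ioi_sdiff_Ioi]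
  exact le_measure_sdiff

end IsLastZeroLaw

section ExponentialScale

variable {r z : ℝ} {x : ℝ≥0∞}

lemma eLogProb_zero : eLogProb 0 = ⊥ := if_pos rfl

lemma coe_one_div_mul_eLogProb_le (hr : 0 < r) (hx : x ≤ ENNReal.ofReal (exp z)) :
    ((1 / r : ℝ) : EReal) * eLogProb x ≤ ((z / r : ℝ) : EReal) := by
  rcases eq_or_ne x 0 with rfl | hx0
  · rw [eLogProb_zero, EReal.coe_mul_bot_of_pos (by positivity)]
    exact bot_le
  have hpos : 0 < x.toReal := ENNReal.toReal_pos hx0 (ne_top_of_le_ne_top ENNReal.ofReal_ne_top hx)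
  have hle : x.toReal ≤ exp z := ENNReal.toReal_le_of_le_ofReal (exp_pos z).le hx
  rw [eLogProb, if_neg hx0, ← EReal.coe_mul, EReal.coe_le_coe_iff, one_div_mul_eq_div]
  exact div_le_div_of_nonneg_right ((log_le_iff_le_exp hpos).2 hle) hr.le

lemma coe_div_le_one_div_mul_eLogProb (hr : 0 < r) (hx : ENNReal.ofReal (exp z) ≤ x)
    (hx_top : x ≠ ∞) : ((z / r : ℝ) : EReal) ≤ ((1 / r : ℝ) : EReal) * eLogProb x := by
  have hx0 : x ≠ 0 := ((ENNReal.ofReal_pos.2 (exp_pos z)).trans_le hx).ne'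
  have hle : exp z ≤ x.toReal := (ENNReal.ofReal_le_iff_le_toReal hx_top).1 hx
  rw [eLogProb, if_neg hx0, ← EReal.coe_mul, EReal.coe_le_coe_iff, one_div_mul_eq_div]
  exact div_le_div_of_nonneg_right ((le_log_iff_exp_le ((exp_pos z).trans_le hle)).2 hle) hr.le

variable {f : ℝ → ℝ≥0∞} {A c c' : ℝ}

lemma limsup_one_div_mul_eLogProb_le (h : ∀ᶠ r in atTop, f r ≤ ENNReal.ofReal (exp (-(c * r)))) :
    limsup (fun r : ℝ => ((1 / r : ℝ) : EReal) * eLogProb (f r)) atTop ≤ ((-c : ℝ) : EReal) := by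
  refine limsup_le_of_le (by isBoundedDefault) ?_
  filter_upwards [h, eventually_gt_atTop 0] with r hfr hr
  convert coe_one_div_mul_eLogProb_le hr hfr using 2
  field_simp

lemma le_liminf_one_div_mul_eLogProb (hA : 0 < A) (hf : ∀ᶠ r in atTop, f r ≠ ∞)
    (h : ∀ᶠ r in atTop, ENNReal.ofReal (A * exp (-(c * r))) ≤ f r) :
    ((-c : ℝ) : EReal) ≤ liminf (fun r : ℝ => ((1 / r : ℝ) : EReal) * eLogProb (f r)) atTop := by
  have hlim : Tendsto (fun r : ℝ => ((log A * r⁻¹ - c : ℝ) : EReal)) atTop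
      (𝓝 ((-c : ℝ) : EReal)) := by
    refine EReal.tendsto_coe.2 ?_
    simpa using (tendsto_inv_atTop_zero.const_mul (log A)).sub_const c
  refine hlim.liminf_eq.symm.trans_le (liminf_le_liminf ?_)
  filter_upwards [h, hf, eventually_gt_atTop 0] with r hfr hf_top hr
  convert coe_div_le_one_div_mul_eLogProb hr (z := log A - c * r) ?_ hf_top using 2
  · field_simp
  · rwa [sub_eq_add_neg, exp_add, exp_log hA]

lemma eventually_ofReal_le_ofReal_sub (hA : 0 < A) (hcc' : c < c') :
    ∀ᶠ r in atTop, ENNReal.ofReal (A / 2 * exp (-(c * r)))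
      ≤ ENNReal.ofReal (A * exp (-(c * r))) - ENNReal.ofReal (exp (-(c' * r))) := by
  have hdecay : Tendsto (fun r : ℝ => exp (-((c' - c) * r))) atTop (𝓝 0) :=
    tendsto_exp_atBot.comp (tendsto_neg_atTop_atBot.comp
      (tendsto_id.const_mul_atTop (sub_pos.2 hcc')))
  filter_upwards [hdecay.eventually (eventually_le_nhds (half_pos hA))] with r hr
  rw [← ENNReal.ofReal_sub _ (exp_pos _).le]
  refine ENNReal.ofReal_le_ofReal ?_
  have hsplit : exp (-(c' * r)) = exp (-(c * r)) * exp (-((c' - c) * r)) := by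
    rw [← exp_add]
    ring_nf
  have := mul_le_mul_of_nonneg_left hr (exp_pos (-(c * r))).le
  rw [hsplit]
  linarith

end ExponentialScale

section LastZeroFamily

variable {μ t a b s : ℝ} {P : ℝ → Measure ℝ} {C G : Set ℝ}

lemma sq_mul_sqrt_div_two_mul (μ a : ℝ) {r : ℝ} (hr : 0 ≤ r) :
    (μ * √r) ^ 2 / 2 * a = μ ^ 2 * a / 2 * r := by
  rw [mul_pow, sq_sqrt hr]
  ring

lemma limsup_eq_bot_of_inter_Icc_eq_empty (hP : ∀ r > 0, IsLastZeroLaw (μ * √r) t (P r))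
    (ht : 0 < t) (hC : C ∩ Icc 0 t = ∅) :
    limsup (fun r : ℝ => ((1 / r : ℝ) : EReal) * eLogProb (P r C)) atTop = ⊥ := by
  refine (limsup_congr ?_).trans (limsup_const ⊥)
  filter_upwards [eventually_gt_atTop 0] with r hr
  rw [(hP r hr).measure_eq_zero_of_inter_Icc_eq_empty ht hC, eLogProb_zero,
    EReal.coe_mul_bot_of_pos (by positivity)]

lemma limsup_le_of_inter_Icc_subset_Ici (hP : ∀ r > 0, IsLastZeroLaw (μ * √r) t (P r))
    (hb : b ∈ Icc 0 t) (hC : C ∩ Icc 0 t ⊆ Ici b) :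
    limsup (fun r : ℝ => ((1 / r : ℝ) : EReal) * eLogProb (P r C)) atTop
      ≤ ((-(μ ^ 2 * b / 2) : ℝ) : EReal) := by
  rcases hb.1.eq_or_lt with rfl | hb0
  · refine limsup_one_div_mul_eLogProb_le ?_
    filter_upwards [eventually_gt_atTop 0] with r hr
    have := (hP r hr).isProbabilityMeasure
    simpa using prob_le_one
  have hbound : ∀ a ∈ Ioo 0 b, limsup (fun r : ℝ => ((1 / r : ℝ) : EReal) * eLogProb (P r C))
      atTop ≤ ((-(μ ^ 2 * a / 2) : ℝ) : EReal) := by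
    intro a ha
    refine limsup_one_div_mul_eLogProb_le ?_
    filter_upwards [eventually_gt_atTop 0] with r hr
    rw [← sq_mul_sqrt_div_two_mul μ a hr.le]
    refine (hP r hr).measure_le_exp ⟨ha.1, ha.2.le.trans hb.2⟩ fun z hz => ?_
    by_contra hz'
    simp only [mem_union, mem_Iic, mem_Ioi, not_or, not_le, not_lt] at hz'
    have hbz : b ≤ z := hC ⟨hz, hz'.1.le, hz'.2.trans (ha.2.le.trans hb.2)⟩
    linarith [ha.2]
  have hcont : Continuous fun a : ℝ => ((-(μ ^ 2 * a / 2) : ℝ) : EReal) :=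
    continuous_coe_real_ereal.comp (by fun_prop)
  exact ge_of_tendsto (hcont.continuousWithinAt (s := Iio b))
    (eventually_of_mem (Ioo_mem_nhdsLT hb0) hbound)

lemma le_liminf_of_Ioc_subset (hP : ∀ r > 0, IsLastZeroLaw (μ * √r) t (P r)) (hμ : μ ≠ 0)
    (ha : 0 < a) (has : a < s) (hsb : s < b) (hbt : b ≤ t) (hG : Ioc a b ⊆ G) :
    ((-(μ ^ 2 * s / 2) : ℝ) : EReal)
      ≤ liminf (fun r : ℝ => ((1 / r : ℝ) : EReal) * eLogProb (P r G)) atTop := by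
  -- the witness `k` of `le_lastZeroTail` is chosen so that `a (1 + k²) = s`
  set k := √(s / a - 1)
  have hsa : 0 < s / a - 1 := by rw [sub_pos, one_lt_div ha]; exact has
  have hk : 0 < k := sqrt_pos.2 hsa
  have hks : a * (1 + k ^ 2) = s := by
    rw [sq_sqrt hsa.le]
    field_simp
    ring
  have hkL : k ≤ √((t - a) / a) := by
    refine sqrt_le_sqrt ?_
    rw [sub_div, div_self ha.ne']
    gcongr
    linarith
  set A := 2 / π * (k / (1 + k ^ 2))
  have hA : 0 < A := by positivity
  have hsb' : μ ^ 2 * s / 2 < μ ^ 2 * b / 2 := by gcongr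
  refine le_liminf_one_div_mul_eLogProb (half_pos hA) ?_ ?_
  · filter_upwards [eventually_gt_atTop 0] with r hr
    have := (hP r hr).isProbabilityMeasure
    exact measure_ne_top _ _
  filter_upwards [eventually_ofReal_le_ofReal_sub hA hsb', eventually_gt_atTop 0]
    with r hr_large hr
  have h_tail_a := le_lastZeroTail (m := μ * √r) (t := t) ha.le hk.le hkL
  rw [hks, sq_mul_sqrt_div_two_mul μ s hr.le] at h_tail_a
  have h_tail_b := lastZeroTail_le_exp (m := μ * √r) (t := t) (ha.trans (has.trans hsb)).le
  rw [sq_mul_sqrt_div_two_mul μ b hr.le] at h_tail_b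
  calc _ ≤ _ := hr_large
    _ ≤ _ := tsub_le_tsub (ENNReal.ofReal_le_ofReal h_tail_a) (ENNReal.ofReal_le_ofReal h_tail_b)
    _ ≤ P r (Ioc a b) := (hP r hr).ofReal_sub_le_measure_Ioc ⟨ha, by linarith⟩
        ⟨by linarith, hbt⟩
    _ ≤ P r G := measure_mono hG

lemma le_liminf_of_mem_Ioo (hP : ∀ r > 0, IsLastZeroLaw (μ * √r) t (P r)) (hμ : μ ≠ 0)
    (hG : IsOpen G) (hs : s ∈ G ∩ Ioo 0 t) :
    ((-(μ ^ 2 * s / 2) : ℝ) : EReal)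
      ≤ liminf (fun r : ℝ => ((1 / r : ℝ) : EReal) * eLogProb (P r G)) atTop := by
  obtain ⟨ε, hε, hball⟩ := Metric.isOpen_iff.1 (hG.inter isOpen_Ioo) s hs
  rw [Real.ball_eq_Ioo] at hball
  have hmem : ∀ z ∈ Icc (s - ε / 2) (s + ε / 2), z ∈ G ∩ Ioo 0 t :=
    fun z hz => hball ⟨by linarith [hz.1], by linarith [hz.2]⟩
  exact le_liminf_of_Ioc_subset hP hμ (hmem _ (left_mem_Icc.2 (by linarith))).2.1
    (by linarith) (by linarith) (hmem _ (right_mem_Icc.2 (by linarith))).2.2.le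
    fun z hz => (hmem z (Ioc_subset_Icc_self hz)).1

lemma le_liminf_of_mem_Icc (hP : ∀ r > 0, IsLastZeroLaw (μ * √r) t (P r)) (hμ : μ ≠ 0)
    (ht : 0 < t) (hG : IsOpen G) (hbG : b ∈ G) (hb : b ∈ Icc 0 t) :
    ((-(μ ^ 2 * b / 2) : ℝ) : EReal)
      ≤ liminf (fun r : ℝ => ((1 / r : ℝ) : EReal) * eLogProb (P r G)) atTop := by
  have : (𝓝[Ioo 0 t] b).NeBot :=
    mem_closure_iff_nhdsWithin_neBot.1 (by rwa [closure_Ioo ht.ne])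
  have hcont : Continuous fun s : ℝ => ((-(μ ^ 2 * s / 2) : ℝ) : EReal) :=
    continuous_coe_real_ereal.comp (by fun_prop)
  refine le_of_tendsto (hcont.continuousWithinAt (s := Ioo 0 t)) ?_
  filter_upwards [inter_mem_nhdsWithin (Ioo 0 t) (hG.mem_nhds hbG)] with s hs
  exact le_liminf_of_mem_Ioo hP hμ hG ⟨hs.2, hs.1⟩

end LastZeroFamily

section RateFunction

variable {μ t b : ℝ}

lemma rateJ_of_mem (hb : b ∈ Icc 0 t) : rateJ μ t b = ((μ ^ 2 * b / 2 : ℝ) : EReal) := if_pos hb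

lemma rateJ_of_notMem (hb : b ∉ Icc 0 t) : rateJ μ t b = ⊤ := if_neg hb

lemma isCompact_setOf_rateJ_le (μ t η : ℝ) : IsCompact {b | rateJ μ t b ≤ (η : EReal)} := by
  have hset : {b | rateJ μ t b ≤ (η : EReal)} = Icc 0 t ∩ {b | μ ^ 2 * b / 2 ≤ η} := by
    ext b
    by_cases hb : b ∈ Icc 0 t <;> simp [rateJ_of_mem, rateJ_of_notMem, hb]
  rw [hset]
  exact isCompact_Icc.inter_right (isClosed_le (by fun_prop) continuous_const)

end RateFunction

theorem stmt_11 (μ t : ℝ) (hμ : μ ≠ 0) (ht : 0 < t)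
    (P : ℝ → Measure ℝ) (hprob : ∀ r > 0, IsProbabilityMeasure (P r))
    (hcdf : ∀ r > 0, ∀ a ∈ Set.Ioc 0 t,
      P r (Set.Iic a) = ENNReal.ofReal (1 - (2 / π) *
        ∫ y in (0:ℝ)..Real.sqrt ((t - a) / a),
          Real.exp (-((μ * Real.sqrt r) ^ 2 / 2) * a * (1 + y ^ 2)) / (1 + y ^ 2)))
    (h0 : ∀ r > 0, P r (Set.Iic 0) = 0) :
    (∀ η : ℝ, IsCompact {b : ℝ | rateJ μ t b ≤ (η : EReal)}) ∧
    (∀ C : Set ℝ, IsClosed C →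
      limsup (fun r : ℝ => ((1 / r : ℝ) : EReal) * eLogProb (P r C)) atTop ≤
        -⨅ b ∈ C, rateJ μ t b) ∧
    (∀ G : Set ℝ, IsOpen G →
      -⨅ b ∈ G, rateJ μ t b ≤
        liminf (fun r : ℝ => ((1 / r : ℝ) : EReal) * eLogProb (P r G)) atTop) := by
  have hP : ∀ r > 0, IsLastZeroLaw (μ * √r) t (P r) :=
    fun r hr => ⟨hprob r hr, h0 r hr, hcdf r hr⟩
  refine ⟨isCompact_setOf_rateJ_le μ t, fun C hC => ?_, fun G hG => ?_⟩
  · rcases (C ∩ Icc 0 t).eq_empty_or_nonempty with hempty | hne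
    · rw [limsup_eq_bot_of_inter_Icc_eq_empty hP ht hempty]
      exact bot_le
    obtain ⟨b, hbC, hb_least⟩ := (isCompact_Icc.inter_left hC).exists_isLeast hne
    calc _ ≤ ((-(μ ^ 2 * b / 2) : ℝ) : EReal) :=
          limsup_le_of_inter_Icc_subset_Ici hP hbC.2 hb_least
      _ = -rateJ μ t b := by rw [rateJ_of_mem hbC.2, EReal.coe_neg]
      _ ≤ -⨅ b ∈ C, rateJ μ t b := EReal.neg_le_neg_iff.2 (iInf₂_le b hbC.1)
  · rw [EReal.neg_le]
    refine le_iInf₂ fun b hbG => ?_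
    by_cases hb : b ∈ Icc 0 t
    · rw [rateJ_of_mem hb, EReal.neg_le, ← EReal.coe_neg]
      exact le_liminf_of_mem_Icc hP hμ ht hG hbG hb
    · rw [rateJ_of_notMem hb]
      exact le_top
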